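/- Let A = KQ/I be a bounded quiver algebra and let a_1 a_2 ⋯ a_l be a 2-truncated oriented cycle in A of minimal length. Then for every m ≥ 1 the l rotations (a_1, …, a_l, …, a_1, …, a_l), (a_2, …, a_1, …, a_2, …, a_1), …, (a_l, …, a_{l−1}, …, a_l, …, a_{l−1}) of the (lm)-tuple obtained by repeating the cycle m times are K-linearly independent elements of C̄_S(A)_{lm−1} = A ⊗_{S^e} J^{⊗_S (lm−1)}. -/

import Mathlib

set_option maxHeartbeats 1000000
set_option synthInstance.maxHeartbeats 400000

/-!
Bounded quiver algebras `A = KQ/I`, truncated oriented cycles, and Hochschild homology.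
-/

universe u

open Quiver
open scoped TensorProduct
open PiTensorProduct

section PathAlgebra

variable (K : Type u) [Field K]
variable (V : Type u) [Quiver.{u} V]

/-- The standard presentation relations of the path algebra `KQ` of a quiver `Q`:
the trivial paths `e v` are orthogonal idempotents summing to `1`, and each arrow
`a : v ⟶ w` satisfies `e v * a = a` and `a * e w = a`.  (Multiplication is written
in the order of path composition: `p * q` is "`p` then `q`".) -/
inductive PathAlgRel [Fintype V] :
    FreeAlgebra K (V ⊕ Σ v : V, Σ w : V, v ⟶ w) →
    FreeAlgebra K (V ⊕ Σ v : V, Σ w : V, v ⟶ w) → Prop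
  | idem (v : V) : PathAlgRel
      (FreeAlgebra.ι K (.inl v) * FreeAlgebra.ι K (.inl v)) (FreeAlgebra.ι K (.inl v))
  | orth (v w : V) (h : v ≠ w) : PathAlgRel
      (FreeAlgebra.ι K (.inl v) * FreeAlgebra.ι K (.inl w)) 0
  | sum_idem : PathAlgRel (∑ v : V, FreeAlgebra.ι K (.inl v)) 1
  | left {v w : V} (a : v ⟶ w) : PathAlgRel
      (FreeAlgebra.ι K (.inl v) * FreeAlgebra.ι K (.inr ⟨v, w, a⟩))
      (FreeAlgebra.ι K (.inr ⟨v, w, a⟩))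
  | right {v w : V} (a : v ⟶ w) : PathAlgRel
      (FreeAlgebra.ι K (.inr ⟨v, w, a⟩) * FreeAlgebra.ι K (.inl w))
      (FreeAlgebra.ι K (.inr ⟨v, w, a⟩))

variable [Fintype V]

/-- The path algebra `KQ` of the quiver `Q`, presented by trivial paths and arrows. -/
abbrev PathAlg := RingQuot (PathAlgRel K V)

/-- The trivial path `e v` as an element of the path algebra. -/
noncomputable def paE (v : V) : PathAlg K V :=
  RingQuot.mkAlgHom K (PathAlgRel K V) (FreeAlgebra.ι K (.inl v))

/-- An arrow as an element of the path algebra. -/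
noncomputable def paArrow {v w : V} (a : v ⟶ w) : PathAlg K V :=
  RingQuot.mkAlgHom K (PathAlgRel K V) (FreeAlgebra.ι K (.inr ⟨v, w, a⟩))

/-- A path as an element of the path algebra. -/
noncomputable def paPath : {v w : V} → Path v w → PathAlg K V
  | v, _, .nil => paE K V v
  | _, _, .cons p a => paPath p * paArrow K V a

/-- The `N`-th power `R^N` of the arrow ideal `R` of the path algebra: the two-sided
ideal spanned by (the classes of) all paths of length at least `N`. -/
noncomputable def arrowIdealPow (N : ℕ) : TwoSidedIdeal (PathAlg K V) :=
  TwoSidedIdeal.span {x | ∃ (v w : V) (p : Path v w), N ≤ p.length ∧ x = paPath K V p}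

/-- An ideal `I` of the path algebra is admissible if `R^N ⊆ I ⊆ R^2` for some `N ≥ 2`. -/
def IsAdmissible (I : TwoSidedIdeal (PathAlg K V)) : Prop :=
  ∃ N : ℕ, 2 ≤ N ∧ arrowIdealPow K V N ≤ I ∧ I ≤ arrowIdealPow K V 2

variable (I : TwoSidedIdeal (PathAlg K V))

/-- The quiver algebra `A = KQ/I` (the quotient of the path algebra by the two-sided
ideal `I`). -/
def QuotAlg : Type u := RingQuot (fun x y : PathAlg K V => x - y ∈ I)

noncomputable instance : Ring (QuotAlg K V I) :=
  inferInstanceAs (Ring (RingQuot (fun x y : PathAlg K V => x - y ∈ I)))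

noncomputable instance : Algebra K (QuotAlg K V I) :=
  inferInstanceAs (Algebra K (RingQuot (fun x y : PathAlg K V => x - y ∈ I)))

/-- The quotient map `KQ → A = KQ/I`. -/
noncomputable def quotMk : PathAlg K V →ₐ[K] QuotAlg K V I :=
  RingQuot.mkAlgHom K _

/-- The trivial path `e v` as an element of `A = KQ/I`. -/
noncomputable def eA (v : V) : QuotAlg K V I := quotMk K V I (paE K V v)

/-- An arrow as an element of `A = KQ/I`. -/
noncomputable def arrA {v w : V} (a : v ⟶ w) : QuotAlg K V I := quotMk K V I (paArrow K V a)

/-- `cycProd K V I v a i k` is the product `a_i a_{i+1} ⋯ a_{i+k-1}` in `A = KQ/I` of `k`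
consecutive arrows of the oriented cycle `a`, starting at position `i`
(for `k = 0` it is the trivial path at the vertex `v i`). -/
noncomputable def cycProd {l : ℕ} (v : ZMod l → V) (a : ∀ i : ZMod l, v i ⟶ v (i + 1)) :
    ZMod l → ℕ → QuotAlg K V I
  | i, 0 => eA K V I (v i)
  | i, k + 1 => arrA K V I (a i) * cycProd v a (i + 1) k

/-- `a` is an oriented cycle of length `l ≥ 1` (through the vertices `v i`) which is
`m`-truncated in `A = KQ/I`: every product of `m` consecutive arrows of the cycle
vanishes in `A`, while no product of `m - 1` consecutive arrows does. -/
def IsMTruncatedCycle (m : ℕ) {l : ℕ} (v : ZMod l → V) (a : ∀ i : ZMod l, v i ⟶ v (i + 1)) :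
    Prop :=
  0 < l ∧ ∀ i : ZMod l, cycProd K V I v a i m = 0 ∧ cycProd K V I v a i (m - 1) ≠ 0

/-- `a` is an oriented cycle of length `l ≥ 1` which is `2`-truncated in `A = KQ/I`:
`a_i a_{i+1} = 0` in `A` for all `i`. -/
def IsTwoTruncatedCycle {l : ℕ} (v : ZMod l → V) (a : ∀ i : ZMod l, v i ⟶ v (i + 1)) : Prop :=
  0 < l ∧ ∀ i : ZMod l, arrA K V I (a i) * arrA K V I (a (i + 1)) = 0

end PathAlgebra


open scoped TensorProduct
open PiTensorProduct

section GenericTensor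

variable (K : Type u) [Field K]
variable (M : Type u) [AddCommGroup M] [Module K M]

/-- `M^{⊗2} ≅ M ⊗ M`. -/
noncomputable def finTwoTensorEquivM : (⨂[K] (_ : Fin 2), M) ≃ₗ[K] M ⊗[K] M :=
  (reindex K (fun _ : Fin 2 => M) (finSumFinEquiv (m := 1) (n := 1)).symm) ≪≫ₗ
    (tmulEquiv K M).symm ≪≫ₗ
      TensorProduct.congr (subsingletonEquiv (0 : Fin 1)) (subsingletonEquiv (0 : Fin 1))

/-- Given a multiplication `mul : M ⊗ M → M`, the 0-th face map
`M^{⊗(n+2)} → M^{⊗(n+1)}` multiplying the first two tensor factors. -/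
noncomputable def gd0 (mul : M ⊗[K] M →ₗ[K] M) (n : ℕ) :
    (⨂[K] (_ : Fin (n + 2)), M) →ₗ[K] ⨂[K] (_ : Fin (n + 1)), M :=
  ((reindex K (fun _ : Fin 1 ⊕ Fin n => M)
        (finSumFinEquiv.trans (finCongr (by omega)))).toLinearMap ∘ₗ
      (tmulEquiv K M).toLinearMap ∘ₗ
        (TensorProduct.map
          ((subsingletonEquiv (0 : Fin 1)).symm.toLinearMap ∘ₗ
            mul ∘ₗ (finTwoTensorEquivM K M).toLinearMap)
          LinearMap.id) ∘ₗ
          (tmulEquiv K M).symm.toLinearMap ∘ₗ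
            (reindex K (fun _ : Fin (n + 2) => M)
              ((finCongr (by omega)).trans (finSumFinEquiv (m := 2) (n := n)).symm)).toLinearMap)

/-- Rotation of tensor factors: `(grot m i) (x_0 ⊗ ⋯ ⊗ x_m)` has `x_{j+i}` in slot `j`. -/
noncomputable def grot (m : ℕ) (i : Fin (m + 1)) :
    (⨂[K] (_ : Fin (m + 1)), M) ≃ₗ[K] ⨂[K] (_ : Fin (m + 1)), M :=
  reindex K (fun _ : Fin (m + 1) => M) (Equiv.addRight i).symm

/-- The `j`-th face map `M^{⊗(k+2)} → M^{⊗(k+1)}` (for `j ≤ k`, so no wrap-around):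
multiply the adjacent tensor factors in slots `j` and `j+1`. -/
noncomputable def gface (mul : M ⊗[K] M →ₗ[K] M) (k : ℕ) (j : Fin (k + 1)) :
    (⨂[K] (_ : Fin (k + 2)), M) →ₗ[K] ⨂[K] (_ : Fin (k + 1)), M :=
  (grot K M k (-j)).toLinearMap ∘ₗ gd0 K M mul k ∘ₗ (grot K M (k + 1) j.castSucc).toLinearMap

/-- `M^{⊗(k+1)} ≅ M ⊗ M^{⊗k}` (splitting off the first factor). -/
noncomputable def splitFirst (k : ℕ) :
    (⨂[K] (_ : Fin (k + 1)), M) ≃ₗ[K] M ⊗[K] (⨂[K] (_ : Fin k), M) :=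
  (reindex K (fun _ : Fin (k + 1) => M)
      ((finCongr (by omega)).trans (finSumFinEquiv (m := 1) (n := k)).symm)) ≪≫ₗ
    (tmulEquiv K M).symm ≪≫ₗ
      TensorProduct.congr (subsingletonEquiv (0 : Fin 1)) (LinearEquiv.refl K _)

/-- `M^{⊗(k+1)} ≅ M^{⊗k} ⊗ M` (splitting off the last factor). -/
noncomputable def splitLast (k : ℕ) :
    (⨂[K] (_ : Fin (k + 1)), M) ≃ₗ[K] (⨂[K] (_ : Fin k), M) ⊗[K] M :=
  (reindex K (fun _ : Fin (k + 1) => M)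
      (finSumFinEquiv (m := k) (n := 1)).symm) ≪≫ₗ
    (tmulEquiv K M).symm ≪≫ₗ
      TensorProduct.congr (LinearEquiv.refl K _) (subsingletonEquiv (0 : Fin 1))

end GenericTensor

section Normalized

open Quiver

variable (K : Type u) [Field K]
variable (V : Type u) [Quiver.{u} V] [Fintype V]
variable (I : TwoSidedIdeal (PathAlg K V))

lemma paE_mul_paArrow {v w : V} (a : v ⟶ w) :
    paE K V v * paArrow K V a = paArrow K V a := by
  have h := RingQuot.mkAlgHom_rel K (PathAlgRel.left (K := K) (V := V) a)
  simpa [paE, paArrow, _root_.map_mul] using h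

/-- The arrow ideal `J = R/I` of `A = KQ/I`, as a `K`-submodule of `A`:
the image of the arrow ideal `R` of `KQ` under the quotient map. -/
noncomputable def normJ : Submodule K (QuotAlg K V I) :=
  Submodule.span K (quotMk K V I '' (arrowIdealPow K V 1 : Set (PathAlg K V)))

lemma arrA_mem_normJ {v w : V} (a : v ⟶ w) : arrA K V I a ∈ normJ K V I := by
  refine Submodule.subset_span ⟨paArrow K V a, ?_, rfl⟩
  refine TwoSidedIdeal.subset_span ⟨v, w, Quiver.Path.nil.cons a, by simp, ?_⟩
  have h : paPath K V (Quiver.Path.nil.cons a) = paE K V v * paArrow K V a := by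
    simp [paPath]
  rw [h, paE_mul_paArrow]

lemma normJ_mul_mem {x y : QuotAlg K V I} (hx : x ∈ normJ K V I) (hy : y ∈ normJ K V I) :
    x * y ∈ normJ K V I := by
  induction hx using Submodule.span_induction with
  | mem x hx =>
    induction hy using Submodule.span_induction with
    | mem y hy =>
      obtain ⟨u, hu, rfl⟩ := hx
      obtain ⟨w, hw, rfl⟩ := hy
      refine Submodule.subset_span ⟨u * w, ?_, _root_.map_mul _ _ _⟩
      exact TwoSidedIdeal.mul_mem_right _ _ _ hu
    | zero => simpa using (normJ K V I).zero_mem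
    | add y z _ _ hy hz => simpa [mul_add] using (normJ K V I).add_mem hy hz
    | smul c y _ hy => simpa [mul_smul_comm] using (normJ K V I).smul_mem c hy
  | zero => simpa using (normJ K V I).zero_mem
  | add x z _ _ hx hz => simpa [add_mul] using (normJ K V I).add_mem hx hz
  | smul c x _ hx => simpa [smul_mul_assoc] using (normJ K V I).smul_mem c hx

/-- Multiplication `J ⊗ J → J`. -/
noncomputable def mulJ : (normJ K V I) ⊗[K] (normJ K V I) →ₗ[K] normJ K V I :=
  TensorProduct.lift
    { toFun := fun x =>
        { toFun := fun y => ⟨(x : QuotAlg K V I) * y, normJ_mul_mem K V I x.2 y.2⟩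
          map_add' := fun y z => by ext; simp [mul_add]
          map_smul' := fun c y => by ext; simp [mul_smul_comm] }
      map_add' := fun x z => by ext y; simp [add_mul]
      map_smul' := fun c x => by ext y; simp [smul_mul_assoc] }

/-- The (lift of the) `m`-th term `A ⊗ J^{⊗m}` of the `S`-normalized Hochschild complex
`C̄_S(A)_m = A ⊗_{Sᵉ} J^{⊗_S m}`, before dividing by the `S`-balancing relations. -/
noncomputable def NTC (m : ℕ) : Type u :=
  (QuotAlg K V I) ⊗[K] (⨂[K] (_ : Fin m), (normJ K V I))

noncomputable instance (m : ℕ) : AddCommGroup (NTC K V I m) :=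
  inferInstanceAs (AddCommGroup ((QuotAlg K V I) ⊗[K] (⨂[K] (_ : Fin m), (normJ K V I))))

noncomputable instance (m : ℕ) : Module K (NTC K V I m) :=
  inferInstanceAs (Module K ((QuotAlg K V I) ⊗[K] (⨂[K] (_ : Fin m), (normJ K V I))))

/-- Build an element of `NTC` from an element of `A` and a tensor of elements of `J`. -/
noncomputable def NTC.mk (m : ℕ) (α : QuotAlg K V I) (x : ⨂[K] (_ : Fin m), normJ K V I) :
    NTC K V I m :=
  α ⊗ₜ[K] x

/-- Reinterpret `NTC` as the tensor product it is. -/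
noncomputable def NTC.equiv (m : ℕ) :
    NTC K V I m ≃ₗ[K] (QuotAlg K V I) ⊗[K] (⨂[K] (_ : Fin m), (normJ K V I)) :=
  LinearEquiv.refl K _

/-- Multiplication `A ⊗ J → A`. -/
noncomputable def mulAJ : (QuotAlg K V I) ⊗[K] (normJ K V I) →ₗ[K] QuotAlg K V I :=
  (LinearMap.mul' K (QuotAlg K V I)) ∘ₗ (LinearMap.lTensor _ (normJ K V I).subtype)

/-- Multiplication `J ⊗ A → A`. -/
noncomputable def mulJA : (normJ K V I) ⊗[K] (QuotAlg K V I) →ₗ[K] QuotAlg K V I :=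
  (LinearMap.mul' K (QuotAlg K V I)) ∘ₗ (LinearMap.rTensor _ (normJ K V I).subtype)

/-- The `0`-th face of the normalized Hochschild boundary:
`x_0 ⊗ (x_1, …, x_{k+1}) ↦ (x_0 x_1) ⊗ (x_2, …, x_{k+1})`. -/
noncomputable def nTerm0 (k : ℕ) : NTC K V I (k + 1) →ₗ[K] NTC K V I k :=
  (LinearMap.rTensor _ (mulAJ K V I)) ∘ₗ
    (TensorProduct.assoc K _ _ _).symm.toLinearMap ∘ₗ
      (LinearMap.lTensor _ (splitFirst K (normJ K V I) k).toLinearMap)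

/-- The last (cyclic) face of the normalized Hochschild boundary:
`x_0 ⊗ (x_1, …, x_{k+1}) ↦ (x_{k+1} x_0) ⊗ (x_1, …, x_k)`. -/
noncomputable def nTermLast (k : ℕ) : NTC K V I (k + 1) →ₗ[K] NTC K V I k :=
  (LinearMap.rTensor _
      ((mulJA K V I) ∘ₗ (TensorProduct.comm K _ _).toLinearMap)) ∘ₗ
    (TensorProduct.assoc K _ _ _).symm.toLinearMap ∘ₗ
      (LinearMap.lTensor _
        ((TensorProduct.comm K _ _).toLinearMap ∘ₗ (splitLast K (normJ K V I) k).toLinearMap))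

/-- A middle face of the normalized Hochschild boundary: multiply the `J`-slots `j`
and `j+1`. -/
noncomputable def nTermMid (k : ℕ) (j : Fin (k + 1)) :
    NTC K V I (k + 2) →ₗ[K] NTC K V I (k + 1) :=
  LinearMap.lTensor (QuotAlg K V I) (gface K (normJ K V I) (mulJ K V I) k j)

/-- The (lift of the) Hochschild boundary `b` of the `S`-normalized complex:
`b(x_0, x_1, …, x_m) = Σ_{i=0}^{m-1} (-1)^i (x_0, …, x_i x_{i+1}, …, x_m)
 + (-1)^m (x_m x_0, x_1, …, x_{m-1})` (and `b = 0` out of degree `0`). -/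
noncomputable def NB : ∀ m : ℕ, NTC K V I m →ₗ[K] NTC K V I (m - 1)
  | 0 => 0
  | 1 => nTerm0 K V I 0 - nTermLast K V I 0
  | (k + 2) =>
      nTerm0 K V I (k + 1) +
        (∑ j : Fin (k + 1),
          ((-1 : K) ^ ((j : ℕ) + 1)) • nTermMid K V I k j) +
          ((-1 : K) ^ (k + 2)) • nTermLast K V I (k + 1)

/-- The submodule of `S^e`-balancing relations in `A ⊗ J^{⊗m}`: dividing by them yields
`C̄_S(A)_m = A ⊗_{Sᵉ} (J^{⊗_S m})`.  Relations (for all vertices `w`, i.e. for a spanning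
set of `S`): `(α e_w) ⊗ (x_0, …) ≡ α ⊗ (e_w x_0, …)`,
`α ⊗ (…, x_i e_w, x_{i+1}, …) ≡ α ⊗ (…, x_i, e_w x_{i+1}, …)`,
`α ⊗ (…, x_{m-1} e_w) ≡ (e_w α) ⊗ (…)`, and in degree `0`: `α e_w ≡ e_w α`. -/
noncomputable def relSub (m : ℕ) : Submodule K (NTC K V I m) :=
  Submodule.span K
    ({z | ∃ (hm : 0 < m) (w : V) (α : QuotAlg K V I) (x : Fin m → normJ K V I)
        (y : normJ K V I),
        (y : QuotAlg K V I) = eA K V I w * ((x ⟨0, hm⟩ : QuotAlg K V I)) ∧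
        z = NTC.mk K V I m (α * eA K V I w) (tprod K x) -
          NTC.mk K V I m α (tprod K (Function.update x ⟨0, hm⟩ y))} ∪
     {z | ∃ (i : ℕ) (hi : i + 1 < m) (w : V) (α : QuotAlg K V I)
        (x : Fin m → normJ K V I) (y y' : normJ K V I),
        (y : QuotAlg K V I) = ((x ⟨i, Nat.lt_of_succ_lt hi⟩ : QuotAlg K V I)) * eA K V I w ∧
        (y' : QuotAlg K V I) = eA K V I w * ((x ⟨i + 1, hi⟩ : QuotAlg K V I)) ∧
        z = NTC.mk K V I m α (tprod K (Function.update x ⟨i, Nat.lt_of_succ_lt hi⟩ y)) -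
          NTC.mk K V I m α (tprod K (Function.update x ⟨i + 1, hi⟩ y'))} ∪
     {z | ∃ (hm : 0 < m) (w : V) (α : QuotAlg K V I) (x : Fin m → normJ K V I)
        (y : normJ K V I),
        (y : QuotAlg K V I) = ((x ⟨m - 1, Nat.sub_lt hm Nat.one_pos⟩ : QuotAlg K V I)) *
          eA K V I w ∧
        z = NTC.mk K V I m α (tprod K (Function.update x ⟨m - 1, Nat.sub_lt hm Nat.one_pos⟩ y)) -
          NTC.mk K V I m (eA K V I w * α) (tprod K x)} ∪
     {z | m = 0 ∧ ∃ (w : V) (α : QuotAlg K V I) (x : Fin m → normJ K V I),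
        z = NTC.mk K V I m (α * eA K V I w) (tprod K x) -
          NTC.mk K V I m (eA K V I w * α) (tprod K x)})

/-- The `m`-th term `C̄_S(A)_m = A ⊗_{Sᵉ} (J^{⊗_S m})` of the `S`-normalized Hochschild
complex of `A = KQ/I`. -/
noncomputable def NormChain (m : ℕ) : Type u := NTC K V I m ⧸ relSub K V I m

/-- The `n`-th homology of the `S`-normalized Hochschild complex (which computes the
Hochschild homology `HH_n(A)`): the quotient of the cycles (elements whose boundary lies
in the balancing relations) by the boundaries together with the balancing relations. -/
noncomputable def NormHH (n : ℕ) : Type u :=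
  LinearMap.ker ((relSub K V I (n - 1)).mkQ ∘ₗ NB K V I n) ⧸
    Submodule.comap (LinearMap.ker ((relSub K V I (n - 1)).mkQ ∘ₗ NB K V I n)).subtype
      ((relSub K V I n) ⊔ LinearMap.range (NB K V I (n + 1)))

/-- The lift to `A ⊗ J^{⊗n}` of the element
`ξ = (a_{start}, a_{start+1}, …)` (the oriented cycle `a`, read from position `start`,
written out to fill `n + 1` tensor slots) of `C̄_S(A)_n`. -/
noncomputable def xiLift {l : ℕ} (v : ZMod l → V) (a : ∀ i : ZMod l, v i ⟶ v (i + 1))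
    (n : ℕ) (start : ZMod l) : NTC K V I n :=
  NTC.mk K V I n (arrA K V I (a start))
    (tprod K (fun i : Fin n =>
      (⟨arrA K V I (a (start + 1 + ((i : ℕ) : ZMod l))),
        arrA_mem_normJ K V I _⟩ : normJ K V I)))


end Normalized

/-!
Since `I ⊆ R²`, the coefficient of an arrow `b` is a well-defined linear form on `A`: it is
read off from a two-dimensional representation of `KQ` in which every path of length two acts
by zero. Multiplying these coefficients along `a_k, a_{k+1}, …, a_{k+lm-1}` over the tensor
factors gives a linear form on `A ⊗ J^{⊗(lm-1)}` that vanishes on the `S`-balancing relations,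
because consecutive arrows of the cycle share a vertex, also across the wrap-around since
`l ∣ lm`. This form is `1` on the `k`-th rotation, and on the `j`-th rotation it vanishes unless
the arrows of the cycle are periodic with period `j - k`. A nonzero period would fold the cycle
into a shorter `2`-truncated cycle, contradicting minimality, so the rotations admit a dual
family of linear forms.
-/

open Classical

namespace PathAlg

variable {K : Type u} [Field K] {V : Type u} [Quiver.{u} V] [Fintype V]
variable {B : Type*} [Ring B] [Algebra K B]

noncomputable def lift (e : V → B) (f : (Σ v : V, Σ w : V, v ⟶ w) → B)
    (idem : ∀ v, e v * e v = e v) (orth : ∀ v w, v ≠ w → e v * e w = 0) (sum : ∑ v, e v = 1)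
    (left : ∀ s, e s.1 * f s = f s) (right : ∀ s, f s * e s.2.1 = f s) :
    PathAlg K V →ₐ[K] B :=
  RingQuot.liftAlgHom K ⟨FreeAlgebra.lift K (Sum.elim e f), fun x y h => by
    induction h with
    | left a => simpa using left ⟨_, _, a⟩
    | right a => simpa using right ⟨_, _, a⟩
    | _ => simp [*]⟩

section Lift

variable (e : V → B) (f : (Σ v : V, Σ w : V, v ⟶ w) → B) (idem orth sum left right)

@[simp] lemma lift_paE (v : V) : lift (K := K) e f idem orth sum left right (paE K V v) = e v := by
  simp [lift, paE]

@[simp] lemma lift_paArrow {v w : V} (a : v ⟶ w) :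
    lift (K := K) e f idem orth sum left right (paArrow K V a) = f ⟨v, w, a⟩ := by
  simp [lift, paArrow]

end Lift

lemma map_eq_zero_of_mem_arrowIdealPow_two (φ : PathAlg K V →ₐ[K] B)
    (hφ : ∀ {u v w : V} (a : u ⟶ v) (b : v ⟶ w), φ (paArrow K V a) * φ (paArrow K V b) = 0)
    {x : PathAlg K V} (hx : x ∈ arrowIdealPow K V 2) : φ x = 0 := by
  suffices arrowIdealPow K V 2 ≤ TwoSidedIdeal.ker φ from (TwoSidedIdeal.mem_ker _).1 (this hx)
  refine TwoSidedIdeal.span_le.2 ?_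
  rintro _ ⟨v, w, p, hp, rfl⟩
  match p, hp with
  | .cons (.cons q a) b, _ =>
    simp [TwoSidedIdeal.mem_ker, paPath, mul_assoc, hφ]

end PathAlg

namespace QuotAlg

variable {K : Type u} [Field K] {V : Type u} [Quiver.{u} V] [Fintype V]
variable {I : TwoSidedIdeal (PathAlg K V)} {B : Type*} [Ring B] [Algebra K B]

noncomputable def lift (φ : PathAlg K V →ₐ[K] B) (hφ : ∀ x ∈ I, φ x = 0) :
    QuotAlg K V I →ₐ[K] B :=
  RingQuot.liftAlgHom K ⟨φ, fun x y h => sub_eq_zero.1 (by simpa using hφ _ h)⟩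

@[simp] lemma lift_quotMk (φ : PathAlg K V →ₐ[K] B) (hφ : ∀ x ∈ I, φ x = 0) (x : PathAlg K V) :
    lift φ hφ (quotMk K V I x) = φ x :=
  RingQuot.liftAlgHom_mkAlgHom_apply K φ _ x

end QuotAlg

section ArrowCoeff

variable {K : Type u} [Field K] {V : Type u} [Quiver.{u} V] [Fintype V]

/-- The action of `KQ` on the span of `e_{t(b)}` and `b` in `KQ/R²`, in that basis. -/
noncomputable def arrowRep (b : Σ v : V, Σ w : V, v ⟶ w) :
    PathAlg K V →ₐ[K] Matrix (Fin 2) (Fin 2) K :=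
  PathAlg.lift (fun u => !![if b.2.1 = u then 1 else 0, 0; 0, if b.1 = u then 1 else 0])
    (fun c => !![0, 0; if c = b then 1 else 0, 0])
    (fun _ => by ext i j; fin_cases i <;> fin_cases j <;> simp [Matrix.mul_apply])
    (fun _ _ _ => by ext i j; fin_cases i <;> fin_cases j <;> simp [Matrix.mul_apply] <;> grind)
    (by ext i j; fin_cases i <;> fin_cases j <;> simp [Matrix.sum_apply])
    (fun _ => by ext i j; fin_cases i <;> fin_cases j <;> simp [Matrix.mul_apply]; grind)
    (fun _ => by ext i j; fin_cases i <;> fin_cases j <;> simp [Matrix.mul_apply]; grind)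

lemma arrowRep_paArrow_mul_paArrow (b : Σ v : V, Σ w : V, v ⟶ w) {u v w : V} (c : u ⟶ v)
    (d : v ⟶ w) : arrowRep (K := K) b (paArrow K V c) * arrowRep b (paArrow K V d) = 0 := by
  ext i j; fin_cases i <;> fin_cases j <;> simp [arrowRep, Matrix.mul_apply]

variable (I : TwoSidedIdeal (PathAlg K V)) (hI2 : I ≤ arrowIdealPow K V 2)

/-- The coefficient of the arrow `b` in an element of `A = KQ/I`. -/
noncomputable def arrowCoeff (b : Σ v : V, Σ w : V, v ⟶ w) : QuotAlg K V I →ₗ[K] K :=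
  Matrix.entryLinearMap K K 1 0 ∘ₗ
    (QuotAlg.lift (arrowRep b) fun _ hx => PathAlg.map_eq_zero_of_mem_arrowIdealPow_two _
      (arrowRep_paArrow_mul_paArrow b) (hI2 hx)).toLinearMap

variable {I}

lemma arrowCoeff_arrA (b : Σ v : V, Σ w : V, v ⟶ w) {v w : V} (c : v ⟶ w) :
    arrowCoeff I hI2 b (arrA K V I c) = if ⟨v, w, c⟩ = b then 1 else 0 := by
  simp [arrowCoeff, arrowRep, arrA]

lemma arrowCoeff_mul_eA (b : Σ v : V, Σ w : V, v ⟶ w) (α : QuotAlg K V I) (w : V) :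
    arrowCoeff I hI2 b (α * eA K V I w) = if b.2.1 = w then arrowCoeff I hI2 b α else 0 := by
  simp [arrowCoeff, arrowRep, eA, Matrix.mul_apply, Fin.sum_univ_two]

lemma arrowCoeff_eA_mul (b : Σ v : V, Σ w : V, v ⟶ w) (α : QuotAlg K V I) (w : V) :
    arrowCoeff I hI2 b (eA K V I w * α) = if b.1 = w then arrowCoeff I hI2 b α else 0 := by
  simp [arrowCoeff, arrowRep, eA, Matrix.vecMul, dotProduct]

end ArrowCoeff

lemma Fintype.prod_apply_update_of_eq_mul {ι β M : Type*} [Fintype ι] [DecidableEq ι]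
    [CommMonoid M] (g : ι → β → M) (x : ι → β) (i : ι) (y : β) (c : M)
    (h : g i y = c * g i (x i)) :
    ∏ o, g o (Function.update x i y o) = c * ∏ o, g o (x o) := by
  rw [Finset.prod_congr rfl fun o _ => Function.apply_update g x i y o,
    Finset.prod_update_of_mem (Finset.mem_univ i), h, mul_assoc, Finset.sdiff_singleton_eq_erase,
    Finset.mul_prod_erase _ (fun o => g o (x o)) (Finset.mem_univ i)]

section CycleArrow

variable {V : Type u} [Quiver.{u} V] {l : ℕ} (v : ZMod l → V) (a : ∀ i : ZMod l, v i ⟶ v (i + 1))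

def cycleArrow (i : ZMod l) : Σ v : V, Σ w : V, v ⟶ w := ⟨v i, v (i + 1), a i⟩

@[simp] lemma cycleArrow_fst (i : ZMod l) : (cycleArrow v a i).1 = v i := rfl

@[simp] lemma cycleArrow_snd_fst (i : ZMod l) : (cycleArrow v a i).2.1 = v (i + 1) := rfl

end CycleArrow

section CycleCoeff

variable {K : Type u} [Field K] {V : Type u} [Quiver.{u} V] [Fintype V]
variable {I : TwoSidedIdeal (PathAlg K V)} (hI2 : I ≤ arrowIdealPow K V 2)
variable {l : ℕ} (v : ZMod l → V) (a : ∀ i : ZMod l, v i ⟶ v (i + 1)) (n : ℕ) (k : ZMod l)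

/-- `α ⊗ x_0 ⊗ ⋯ ⊗ x_{n-1} ↦ c_k(α) c_{k+1}(x_0) ⋯ c_{k+n}(x_{n-1})`, where `c_i` is the
coefficient of the arrow `a_i`. -/
noncomputable def cycleCoeff : NTC K V I n →ₗ[K] K :=
  TensorProduct.lift ((LinearMap.mul K K ∘ₗ arrowCoeff I hI2 (cycleArrow v a k)).compl₂
    (PiTensorProduct.lift ((MultilinearMap.mkPiAlgebra K (Fin n) K).compLinearMap
      fun o => arrowCoeff I hI2 (cycleArrow v a (k + 1 + (o : ℕ))) ∘ₗ (normJ K V I).subtype)))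

variable {n}

lemma cycleCoeff_mk (α : QuotAlg K V I) (x : Fin n → normJ K V I) :
    cycleCoeff hI2 v a n k (NTC.mk K V I n α (tprod K x)) =
      arrowCoeff I hI2 (cycleArrow v a k) α *
        ∏ o : Fin n, arrowCoeff I hI2 (cycleArrow v a (k + 1 + (o : ℕ))) (x o) := by
  erw [cycleCoeff, NTC.mk, TensorProduct.lift.tmul]
  simp

lemma cycleCoeff_mk_update (α : QuotAlg K V I) (x : Fin n → normJ K V I) (i : Fin n)
    (y : normJ K V I) (c : K)
    (h : arrowCoeff I hI2 (cycleArrow v a (k + 1 + (i : ℕ))) y =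
      c * arrowCoeff I hI2 (cycleArrow v a (k + 1 + (i : ℕ))) (x i)) :
    cycleCoeff hI2 v a n k (NTC.mk K V I n α (tprod K (Function.update x i y))) =
      c * cycleCoeff hI2 v a n k (NTC.mk K V I n α (tprod K x)) := by
  rw [cycleCoeff_mk, cycleCoeff_mk, Fintype.prod_apply_update_of_eq_mul
    (fun (o : Fin n) (z : normJ K V I) => arrowCoeff I hI2 (cycleArrow v a (k + 1 + (o : ℕ))) z)
    x i y c h]
  ring

lemma cycleCoeff_mk_mul_eA (α : QuotAlg K V I) (x : Fin n → normJ K V I) (w : V) :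
    cycleCoeff hI2 v a n k (NTC.mk K V I n (α * eA K V I w) (tprod K x)) =
      (if v (k + 1) = w then 1 else 0) *
        cycleCoeff hI2 v a n k (NTC.mk K V I n α (tprod K x)) := by
  by_cases h : v (k + 1) = w <;> simp [cycleCoeff_mk, arrowCoeff_mul_eA, h]

lemma cycleCoeff_mk_eA_mul (α : QuotAlg K V I) (x : Fin n → normJ K V I) (w : V) :
    cycleCoeff hI2 v a n k (NTC.mk K V I n (eA K V I w * α) (tprod K x)) =
      (if v k = w then 1 else 0) * cycleCoeff hI2 v a n k (NTC.mk K V I n α (tprod K x)) := by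
  by_cases h : v k = w <;> simp [cycleCoeff_mk, arrowCoeff_eA_mul, h]

theorem relSub_le_ker_cycleCoeff (hn : ((n + 1 : ℕ) : ZMod l) = 0) :
    relSub K V I n ≤ LinearMap.ker (cycleCoeff hI2 v a n k) := by
  rw [relSub, Submodule.span_le]
  rintro z (((⟨hn0, w, α, x, y, hy, rfl⟩ | ⟨i, hi, w, α, x, y, y', hy, hy', rfl⟩) |
    ⟨hn0, w, α, x, y, hy, rfl⟩) | ⟨rfl, w, α, x, rfl⟩)
  all_goals rw [SetLike.mem_coe, LinearMap.mem_ker, map_sub, sub_eq_zero]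
  · rw [cycleCoeff_mk_mul_eA, cycleCoeff_mk_update (c := if v (k + 1) = w then 1 else 0)]
    by_cases hw : v (k + 1) = w <;> simp [hy, arrowCoeff_eA_mul, hw]
  · set u := v (k + 1 + ((i : ℕ) + 1))
    rw [cycleCoeff_mk_update (c := if u = w then 1 else 0),
      cycleCoeff_mk_update (i := ⟨i + 1, hi⟩) (c := if u = w then 1 else 0)]
    · by_cases hw : u = w <;> simp [u, hy', arrowCoeff_eA_mul, hw]
    · by_cases hw : u = w <;> simp [u, hy, arrowCoeff_mul_eA, add_assoc (k + 1) (i : ZMod l) 1, hw]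
  · have hwrap : k + 1 + ((n - 1 : ℕ) : ZMod l) + 1 = k := by
      push_cast [Nat.cast_sub hn0] at hn ⊢
      linear_combination hn
    rw [cycleCoeff_mk_eA_mul, cycleCoeff_mk_update (c := if v k = w then 1 else 0)]
    by_cases hw : v k = w <;> simp [hy, arrowCoeff_mul_eA, hw, hwrap]
  · have hloop : k + 1 = k := by simpa using hn
    rw [cycleCoeff_mk_mul_eA, cycleCoeff_mk_eA_mul, hloop]

end CycleCoeff

section MinimalCycle

variable {K : Type u} [Field K] {V : Type u} [Quiver.{u} V] [Fintype V]
variable {I : TwoSidedIdeal (PathAlg K V)}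

lemma arrA_homOfEq {u v u' v' : V} (c : u ⟶ v) (hu : u = u') (hv : v = v') :
    arrA K V I (Quiver.homOfEq c hu hv) = arrA K V I c := by
  subst hu hv; rfl

lemma ZMod.natCast_val_add_one_eq {l p : ℕ} [NeZero p] (i : ZMod p) :
    (((i + 1).val : ℕ) : ZMod l) + (((i.val + 1) / p : ℕ) : ZMod l) * (p : ZMod l) =
      ((i.val : ℕ) : ZMod l) + 1 := by
  have h : (i + 1).val + p * ((i.val + 1) / p) = i.val + 1 := by
    rw [ZMod.val_add, ZMod.val_one_eq_one_mod, Nat.add_mod_mod, Nat.mod_add_div]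
  rw [mul_comm, ← Nat.cast_mul, ← Nat.cast_add, h, Nat.cast_succ]

theorem IsTwoTruncatedCycle.exists_shorter_of_periodic {l : ℕ} {v : ZMod l → V}
    {a : ∀ i : ZMod l, v i ⟶ v (i + 1)} (ha : IsTwoTruncatedCycle K V I v a) {d : ZMod l}
    (hd : d ≠ 0) (hper : Function.Periodic (cycleArrow v a) d) :
    ∃ (l' : ℕ) (v' : ZMod l' → V) (a' : ∀ i : ZMod l', v' i ⟶ v' (i + 1)),
      IsTwoTruncatedCycle K V I v' a' ∧ l' < l := by
  have : NeZero l := ⟨ha.1.ne'⟩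
  have : NeZero d.val := ⟨(ZMod.val_ne_zero d).2 hd⟩
  let f : ZMod d.val → ZMod l := fun i => ((i.val : ℕ) : ZMod l)
  have hstep : ∀ i, cycleArrow v a (f (i + 1)) = cycleArrow v a (f i + 1) := fun i => by
    rw [← ZMod.natCast_val_add_one_eq (l := l) i, ZMod.natCast_zmod_val, hper.nat_mul]
  have hv : ∀ i, v (f i + 1) = v (f (i + 1)) := fun i => (congrArg Sigma.fst (hstep i)).symm
  refine ⟨d.val, fun i => v (f i), fun i => Quiver.homOfEq (a (f i)) rfl (hv i),
    ⟨NeZero.pos _, fun i => ?_⟩, ZMod.val_lt d⟩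
  have harr : arrA K V I (a (f (i + 1))) = arrA K V I (a (f i + 1)) :=
    congrArg (fun s : Σ v : V, Σ w : V, v ⟶ w => arrA K V I s.2.2) (hstep i)
  simp only [arrA_homOfEq, harr, ha.2]

end MinimalCycle

section Rotations

variable {K : Type u} [Field K] {V : Type u} [Quiver.{u} V] [Fintype V]
variable {I : TwoSidedIdeal (PathAlg K V)} (hI2 : I ≤ arrowIdealPow K V 2)
variable {l : ℕ} (v : ZMod l → V) (a : ∀ i : ZMod l, v i ⟶ v (i + 1)) (n : ℕ)

lemma cycleCoeff_xiLift (j k : ZMod l) :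
    cycleCoeff hI2 v a n k (xiLift K V I v a n j) =
      if cycleArrow v a j = cycleArrow v a k ∧
        ∀ o : Fin n, cycleArrow v a (j + 1 + (o : ℕ)) = cycleArrow v a (k + 1 + (o : ℕ))
      then 1 else 0 := by
  simp only [xiLift, cycleCoeff_mk, arrowCoeff_arrA, Finset.prod_ite_zero, Finset.mem_univ,
    true_implies, Finset.prod_const_one, mul_ite, mul_one, mul_zero, ← ite_and, and_comm]
  rfl

lemma cycleCoeff_xiLift_self (k : ZMod l) : cycleCoeff hI2 v a n k (xiLift K V I v a n k) = 1 := by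
  simp [cycleCoeff_xiLift]

variable {v a n}

lemma periodic_cycleArrow_of_cycleCoeff_xiLift_ne_zero [NeZero l] (hl : l ≤ n + 1)
    {j k : ZMod l} (h : cycleCoeff hI2 v a n k (xiLift K V I v a n j) ≠ 0) :
    Function.Periodic (cycleArrow v a) (j - k) := by
  rw [cycleCoeff_xiLift, ne_eq, ite_eq_right_iff, not_forall] at h
  obtain ⟨⟨h0, hsucc⟩, -⟩ := h
  have hshift : ∀ c ≤ n, cycleArrow v a (j + c) = cycleArrow v a (k + c) := by
    rintro (_ | c) hc
    · simpa using h0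
    · simpa [add_assoc, add_comm (1 : ZMod l)] using hsucc ⟨c, by omega⟩
  intro i
  have := hshift (i - k).val (by have := ZMod.val_lt (i - k); omega)
  rwa [ZMod.natCast_zmod_val, add_sub_cancel, add_sub_left_comm] at this

lemma cycleCoeff_xiLift_of_ne (ha : IsTwoTruncatedCycle K V I v a)
    (hmin : ∀ (l' : ℕ) (v' : ZMod l' → V) (a' : ∀ i : ZMod l', v' i ⟶ v' (i + 1)),
      IsTwoTruncatedCycle K V I v' a' → l ≤ l')
    (hl : l ≤ n + 1) {j k : ZMod l} (hjk : j ≠ k) :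
    cycleCoeff hI2 v a n k (xiLift K V I v a n j) = 0 := by
  have : NeZero l := ⟨ha.1.ne'⟩
  by_contra h
  obtain ⟨l', v', a', ha', hl'⟩ := ha.exists_shorter_of_periodic (sub_ne_zero.2 hjk)
    (periodic_cycleArrow_of_cycleCoeff_xiLift_ne_zero hI2 hl h)
  exact (hmin l' v' a' ha').not_gt hl'

end Rotations

/-- Let `A = KQ/I` be a bounded quiver algebra and let `a_1 ⋯ a_l` be a
`2`-truncated oriented cycle in `A` of minimal length.  Then for every `m ≥ 1` the `l`
rotations of the `(lm)`-tuple obtained by repeating the cycle `m` times are `K`-linearly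
independent elements of `C̄_S(A)_{lm-1} = A ⊗_{Sᵉ} J^{⊗_S (lm-1)}`. -/
theorem stmt12 (K : Type u) [Field K] (V : Type u) [Quiver.{u} V]
    [Fintype V] [∀ v w : V, Fintype (v ⟶ w)]
    (I : TwoSidedIdeal (PathAlg K V)) (hI : IsAdmissible K V I)
    (l : ℕ) (v : ZMod l → V) (a : ∀ i : ZMod l, v i ⟶ v (i + 1))
    (ha : IsTwoTruncatedCycle K V I v a)
    (hmin : ∀ (l' : ℕ) (v' : ZMod l' → V) (a' : ∀ i : ZMod l', v' i ⟶ v' (i + 1)),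
      IsTwoTruncatedCycle K V I v' a' → l ≤ l') :
    ∀ m : ℕ, 1 ≤ m →
      LinearIndependent K
        (fun j : ZMod l => (relSub K V I (l * m - 1)).mkQ (xiLift K V I v a (l * m - 1) j)) := by
  intro m hm
  obtain ⟨-, -, -, hI2⟩ := hI
  have hlm : l * m - 1 + 1 = l * m := Nat.sub_add_cancel (Nat.mul_pos ha.1 hm)
  have hn : ((l * m - 1 + 1 : ℕ) : ZMod l) = 0 := by simp [hlm]
  have hl : l ≤ l * m - 1 + 1 := hlm ▸ Nat.le_mul_of_pos_right l hm
  let coeffs : NTC K V I (l * m - 1) ⧸ relSub K V I (l * m - 1) →ₗ[K] ZMod l → K :=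
    LinearMap.pi fun k => (relSub K V I _).liftQ _ (relSub_le_ker_cycleCoeff hI2 v a k hn)
  refine LinearIndependent.of_comp coeffs ?_
  convert Pi.linearIndependent_single_one (ZMod l) K with j
  ext k
  rcases eq_or_ne j k with rfl | hjk
  · simp [coeffs, cycleCoeff_xiLift_self]
  · simp [coeffs, cycleCoeff_xiLift_of_ne hI2 ha hmin hl hjk, hjk.symm]
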